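/- arXiv:2307.13413 — 2 statements merged into one kernel-verified Lean document; each statement's English description precedes it below -/
import Mathlib

section
/- Suppose h(x)=med(f(x),h(x),g(x)) for all x∈E. Define V⁰(x)=f(x)∧h(x) and recursively V^{n+1}(x)=med(f(x), αΠV^n(x), g(x)) if f(x)<g(x), and V^{n+1}(x)=h(x) if f(x)≥g(x). Then the pointwise limit V(x)=lim_{n→∞}V^n(x) exists, is measurable, and solves the equation: V(x)=med(f(x), αΠV(x), g(x)) for all x with f(x)<g(x), and V(x)=h(x) for all x with f(x)≥g(x). -/
/-!
The operator `V ↦ med(f, αΠV, g)` on `{f < g}` (and `V ↦ h` elsewhere) is monotone, maps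
everything into `[f ∧ h, g ∨ h]`, and `V⁰ = f ∧ h` lies below `V¹`; hence the iterates
increase pointwise to a limit `V`. Since `Π(x, ·)` is the law of `X₁` under `P x`, the
standing assumption makes `f`, `g`, `h` integrable against `Π(x, ·)`, so dominated
convergence passes the operator to the limit and `V` is a fixed point.
-/

open MeasureTheory ProbabilityTheory Set Filter Topology

noncomputable section

namespace DynkinGame

variable {E : Type*} [MeasurableSpace E] {Ω : Type*} [MeasurableSpace Ω]

/-- Setup for a discrete-time Markovian Dynkin game: a time-homogeneous Markov process `X`
with Markov kernel `K` and laws `P x` (starting from `x`), for each player `i = 0, 1` an iid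
sequence of `U(0,1)`-distributed randomization devices `ξ i n`, the whole family
`(ξ i n)_{i,n}` together with the trajectory of `X` being mutually independent,
and a discount factor `α ∈ (0,1)`. -/
structure Setup (E : Type*) [MeasurableSpace E] (Ω : Type*) [MeasurableSpace Ω] where
  /-- the law of the game started at `x` -/
  P : E → Measure Ω
  isProb : ∀ x, IsProbabilityMeasure (P x)
  /-- the state process -/
  X : ℕ → Ω → E
  measX : ∀ n, Measurable (X n)
  /-- the randomization devices of the two players -/
  ξ : Fin 2 → ℕ → Ω → ℝ
  measξ : ∀ i n, Measurable (ξ i n)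
  /-- the Markov kernel of `X` -/
  K : Kernel E E
  isMarkovKernel : IsMarkovKernel K
  /-- the discount factor -/
  α : ℝ
  α_pos : 0 < α
  α_lt_one : α < 1
  /-- `X₀ = x` holds `P x`-a.s. -/
  init : ∀ x, ∀ᵐ ω ∂ P x, X 0 ω = x
  /-- the Markov property of `X` with transition kernel `K`, expressed through
  finite-dimensional distributions tested against bounded measurable functions -/
  markov : ∀ (x : E) (n : ℕ) (φ : (Fin (n + 1) → E) → ℝ) (F : E → ℝ),
    Measurable φ → Measurable F → (∃ C, ∀ v, |φ v| ≤ C) → (∃ C, ∀ y, |F y| ≤ C) →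
    ∫ ω, φ (fun k => X k ω) * F (X (n + 1) ω) ∂ P x
      = ∫ ω, φ (fun k => X k ω) * (∫ y, F y ∂ K (X n ω)) ∂ P x
  /-- each `ξ i n` is uniformly distributed on `[0,1]` -/
  unif : ∀ (x : E) (i : Fin 2) (n : ℕ),
    Measure.map (ξ i n) (P x) = volume.restrict (Icc (0 : ℝ) 1)
  /-- the random variables `ξ i n` (`i = 0,1`, `n ∈ ℕ`) and the trajectory of `X`
  are mutually independent -/
  indep : ∀ x : E, iIndep
    (fun j : Option (Fin 2 × ℕ) =>
      match j with
      | none => MeasurableSpace.comap (fun ω k => X k ω) inferInstance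
      | some (i, n) => MeasurableSpace.comap (ξ i n) inferInstance)
    (P x)

/-- The filtration `σ(X₀,…,Xₙ, ξ₀⁽ⁱ⁾,…,ξₙ⁽ⁱ⁾)` of player `i`. -/
def Setup.filt (S : Setup E Ω) (i : Fin 2) (n : ℕ) : MeasurableSpace Ω :=
  (⨆ k ∈ Iic n, MeasurableSpace.comap (S.X k) inferInstance) ⊔
    ⨆ k ∈ Iic n, MeasurableSpace.comap (S.ξ i k) inferInstance

/-- The admissible stopping times `𝒯ᵢ` of player `i`: stopping times with respect to the
filtration `σ(X₀,…,Xₙ, ξ₀⁽ⁱ⁾,…,ξₙ⁽ⁱ⁾)`, with values in `ℕ∞`. -/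
def Setup.Adm (S : Setup E Ω) (i : Fin 2) : Set (Ω → ℕ∞) :=
  {τ | ∀ n : ℕ, MeasurableSet[S.filt i n] {ω | τ ω ≤ (n : ℕ∞)}}

/-- The Markovian randomized stopping time `τᵖ = inf {n : p (Xₙ) ≥ ξₙ⁽ⁱ⁾}` (with `inf ∅ = ∞`). -/
def Setup.mrst (S : Setup E Ω) (i : Fin 2) (p : E → ℝ) (ω : Ω) : ℕ∞ :=
  ⨅ n ∈ {n : ℕ | S.ξ i n ω ≤ p (S.X n ω)}, (n : ℕ∞)

/-- The discounted payoff `α ^ τ • φ (X_τ)`, read as `0` on `{τ = ∞}`. -/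
def Setup.disc (S : Setup E Ω) (φ : E → ℝ) (τ : Ω → ℕ∞) (ω : Ω) : ℝ :=
  if τ ω = ⊤ then 0 else S.α ^ (τ ω).toNat * φ (S.X (τ ω).toNat ω)

/-- Pathwise reward of a player using stopping time `σ` against the opponent's `τ`:
`α^σ f(X_σ) 1{σ<τ} + α^τ g(X_τ) 1{τ<σ} + α^σ h(X_σ) 1{σ=τ<∞}`. -/
def Setup.payoff (S : Setup E Ω) (f g h : E → ℝ) (σ τ : Ω → ℕ∞) (ω : Ω) : ℝ :=
  (if σ ω < τ ω then S.disc f σ ω else 0) +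
    (if τ ω < σ ω then S.disc g τ ω else 0) +
      (if σ ω = τ ω then S.disc h σ ω else 0)

/-- Expected reward `J(x; σ, τ)` of the player using stopping time `σ` against `τ`. -/
def Setup.J (S : Setup E Ω) (f g h : E → ℝ) (σ τ : Ω → ℕ∞) (x : E) : ℝ :=
  ∫ ω, S.payoff f g h σ τ ω ∂ S.P x

/-- A Markovian (randomized) stopping strategy: a measurable function `E → [0,1]`. -/
def IsStrategy (p : E → ℝ) : Prop := Measurable p ∧ ∀ x, p x ∈ Icc (0 : ℝ) 1

/-- A pure stopping strategy. -/
def IsPure (p : E → ℝ) : Prop := ∀ x, p x = 0 ∨ p x = 1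

/-- `ΠV(x) = ∫ V dΠ(x,·)`, the integral with respect to the transition kernel. -/
def Setup.kint (S : Setup E Ω) (V : E → ℝ) (x : E) : ℝ := ∫ y, V y ∂ S.K x

/-- `E_x [sup_n φ(X̃ₙ)] < ∞` for every `x`, where `X̃` is the process `X` killed at each step
independently with probability `1 - α` (and `φ` vanishes at the cemetery state); equivalently,
with an independent geometric killing time `T`,
`E_x[sup_{n ≤ T} φ(Xₙ) ∨ 0] = ∑ₖ (1-α) αᵏ E_x[max_{n ≤ k} φ(Xₙ) ∨ 0] < ∞`. -/
def Setup.KilledSupFin (S : Setup E Ω) (φ : E → ℝ) : Prop :=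
  ∀ x : E,
    (∑' k : ℕ, ENNReal.ofReal ((1 - S.α) * S.α ^ k) *
      ∫⁻ ω, (Finset.range (k + 1)).sup (fun n => ENNReal.ofReal (φ (S.X n ω))) ∂ S.P x) < ⊤

/-- Standing integrability assumption: `sup_n |φ(X̃ₙ)| ∈ L¹(P_x)` for every `x`. -/
def Setup.KilledSupInt (S : Setup E Ω) (φ : E → ℝ) : Prop :=
  S.KilledSupFin fun x => |φ x|

/-- `(τ₁, τ₂)` is a Nash equilibrium for `x`: each player's stopping time attains the
supremum of the expected reward over admissible stopping times, the opponent's being fixed. -/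
def Setup.IsNashAt (S : Setup E Ω) (f g h : Fin 2 → E → ℝ) (τ₁ τ₂ : Ω → ℕ∞) (x : E) : Prop :=
  (S.J (f 0) (g 0) (h 0) τ₁ τ₂ x = ⨆ σ : S.Adm 0, S.J (f 0) (g 0) (h 0) σ.1 τ₂ x) ∧
    (S.J (f 1) (g 1) (h 1) τ₂ τ₁ x = ⨆ σ : S.Adm 1, S.J (f 1) (g 1) (h 1) σ.1 τ₁ x)

/-- `(p 0, p 1)` is a global Markovian randomized equilibrium: the associated pair of
Markovian randomized stopping times is a Nash equilibrium for every `x ∈ E`. -/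
def Setup.IsGlobalEq (S : Setup E Ω) (f g h : Fin 2 → E → ℝ) (p : Fin 2 → E → ℝ) : Prop :=
  IsStrategy (p 0) ∧ IsStrategy (p 1) ∧
    ∀ x : E, S.IsNashAt f g h (S.mrst 0 (p 0)) (S.mrst 1 (p 1)) x

/-- Zero-sum game: `(p₁, p₂)` is a global Markovian randomized equilibrium when for every `x`,
`τ^{p₁}` maximizes `J₁(x; ·, τ^{p₂})` over `𝒯₁` and `τ^{p₂}` minimizes `J₁(x; τ^{p₁}, ·)`
over `𝒯₂`. -/
def Setup.IsZSEq (S : Setup E Ω) (f g h : E → ℝ) (p₁ p₂ : E → ℝ) : Prop :=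
  IsStrategy p₁ ∧ IsStrategy p₂ ∧
    ∀ x : E,
      (S.J f g h (S.mrst 0 p₁) (S.mrst 1 p₂) x =
        ⨆ σ : S.Adm 0, S.J f g h σ.1 (S.mrst 1 p₂) x) ∧
      (S.J f g h (S.mrst 0 p₁) (S.mrst 1 p₂) x =
        ⨅ σ : S.Adm 1, S.J f g h (S.mrst 0 p₁) σ.1 x)


/-- The middle value of three reals: `med a b c = min (max a b) (min (max a c) (max b c))`. -/
def med (a b c : ℝ) : ℝ := min (min (max a b) (max a c)) (max b c)

/-- `V` solves the fixed point equation `V(x) = med(f(x), αΠV(x), g(x))` when `f(x) < g(x)`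
and `V(x) = h(x)` when `f(x) ≥ g(x)`. -/
def Setup.SolvesMed (S : Setup E Ω) (f g h V : E → ℝ) : Prop :=
  ∀ x : E, (f x < g x → V x = med (f x) (S.α * S.kint V x) (g x)) ∧
    (g x ≤ f x → V x = h x)

/-- The iteration `V⁰ = f ∧ h`, `Vⁿ⁺¹(x) = med(f(x), αΠVⁿ(x), g(x))` if `f(x) < g(x)` and
`Vⁿ⁺¹(x) = h(x)` if `f(x) ≥ g(x)`. -/
def medSeq (S : Setup E Ω) (f g h : E → ℝ) : ℕ → E → ℝ
  | 0 => fun x => min (f x) (h x)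
  | n + 1 => fun x =>
      if f x < g x then med (f x) (S.α * S.kint (medSeq S f g h n) x) (g x) else h x

lemma med_eq_max_min {a b c : ℝ} (hac : a ≤ c) : med a b c = max a (min b c) := by
  simp only [med, min_def, max_def]
  split_ifs <;> linarith

lemma le_med {a b c : ℝ} (hac : a ≤ c) : a ≤ med a b c := by
  rw [med_eq_max_min hac]
  exact le_max_left _ _

lemma med_le {a b c : ℝ} (hac : a ≤ c) : med a b c ≤ c := by
  rw [med_eq_max_min hac]
  exact max_le hac (min_le_right _ _)

lemma med_le_med {a b b' c : ℝ} (hac : a ≤ c) (hb : b ≤ b') : med a b c ≤ med a b' c := by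
  rw [med_eq_max_min hac, med_eq_max_min hac]
  exact max_le_max le_rfl (min_le_min hb le_rfl)

lemma _root_.Measurable.med {u v w : E → ℝ}
    (hu : Measurable u) (hv : Measurable v) (hw : Measurable w) :
    Measurable fun x => med (u x) (v x) (w x) :=
  ((hu.max hv).min (hu.max hw)).min (hv.max hw)

lemma _root_.Filter.Tendsto.med {ι : Type*} {l : Filter ι} {u v w : ι → ℝ} {a b c : ℝ}
    (hu : Tendsto u l (𝓝 a)) (hv : Tendsto v l (𝓝 b)) (hw : Tendsto w l (𝓝 c)) :
    Tendsto (fun i => med (u i) (v i) (w i)) l (𝓝 (med a b c)) :=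
  ((hu.max hv).min (hu.max hw)).min (hv.max hw)

namespace Setup

variable (S : Setup E Ω)

lemma measurable_kint {V : E → ℝ} (hV : Measurable V) : Measurable (S.kint V) :=
  (hV.stronglyMeasurable.integral_kernel (κ := S.K)).measurable

lemma map_X_one (x : E) : (S.P x).map (S.X 1) = S.K x := by
  have := S.isMarkovKernel
  have := S.isProb x
  ext s hs
  have hind : Measurable (s.indicator (1 : E → ℝ)) := measurable_one.indicator hs
  have hmarkov := S.markov x 0 (fun _ => 1) (s.indicator 1) measurable_const hind
    ⟨1, fun _ => by simp⟩ ⟨1, fun y => by by_cases hy : y ∈ s <;> simp [hy]⟩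
  simp only [one_mul] at hmarkov
  have hX0 : ∀ᵐ ω ∂S.P x, ∫ y, s.indicator 1 y ∂S.K (S.X 0 ω) = (S.K x).real s := by
    filter_upwards [S.init x] with ω hω
    rw [hω, integral_indicator_one hs]
  rw [integral_congr_ae hX0, integral_const, ← integral_map (S.measX 1).aemeasurable
    hind.aestronglyMeasurable, integral_indicator_one hs] at hmarkov
  simpa [measureReal_def, ENNReal.toReal_eq_toReal_iff', measure_ne_top] using hmarkov

lemma KilledSupFin.lintegral_lt_top {S : Setup E Ω} {φ : E → ℝ} (hφ : S.KilledSupFin φ)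
    (x : E) (n : ℕ) : ∫⁻ ω, ENNReal.ofReal (φ (S.X n ω)) ∂S.P x < ⊤ := by
  have hweight : ENNReal.ofReal ((1 - S.α) * S.α ^ n) ≠ 0 := by
    have := S.α_lt_one
    have := S.α_pos
    positivity
  have hterm := (ENNReal.le_tsum n).trans_lt (hφ x)
  refine (lintegral_mono fun ω => ?_).trans_lt
    (ENNReal.lt_top_of_mul_ne_top_right hterm.ne hweight)
  exact Finset.le_sup (f := fun k => ENNReal.ofReal (φ (S.X k ω))) (Finset.self_mem_range_succ n)

lemma integrable_kernel_of_killedSupInt {φ : E → ℝ} (hφ : Measurable φ)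
    (hI : S.KilledSupInt φ) (x : E) : Integrable φ (S.K x) := by
  rw [← S.map_X_one x, integrable_map_measure hφ.aestronglyMeasurable (S.measX 1).aemeasurable]
  refine ⟨(hφ.comp (S.measX 1)).aestronglyMeasurable, ?_⟩
  simpa [HasFiniteIntegral, Real.enorm_eq_ofReal_abs] using hI.lintegral_lt_top x 1

/-- `medSeq S f g h` iterates this operator, starting from `f ⊓ h`. -/
def medOp (f g h V : E → ℝ) (x : E) : ℝ :=
  if f x < g x then med (f x) (S.α * S.kint V x) (g x) else h x

variable {S} {f g h : E → ℝ}

lemma solvesMed_of_medOp_eq {V : E → ℝ} (hV : S.medOp f g h V = V) : S.SolvesMed f g h V := by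
  intro x
  constructor
  · intro hfg
    rw [← congrFun hV x, medOp, if_pos hfg]
  · intro hgf
    rw [← congrFun hV x, medOp, if_neg (not_lt.2 hgf)]

lemma medOp_mem_Icc (V : E → ℝ) (x : E) :
    S.medOp f g h V x ∈ Icc (min (f x) (h x)) (max (g x) (h x)) := by
  unfold medOp
  split_ifs with hfg
  · exact ⟨(min_le_left _ _).trans (le_med hfg.le), (med_le hfg.le).trans (le_max_left _ _)⟩
  · exact ⟨min_le_right _ _, le_max_right _ _⟩

lemma measurable_medOp (hf : Measurable f) (hg : Measurable g) (hh : Measurable h)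
    {V : E → ℝ} (hV : Measurable V) : Measurable (S.medOp f g h V) :=
  Measurable.ite (measurableSet_lt hf hg)
    (hf.med (measurable_const.mul (S.measurable_kint hV)) hg) hh

lemma medOp_mono {V W : E → ℝ} {x : E} (hV : Integrable V (S.K x)) (hW : Integrable W (S.K x))
    (hVW : V ≤ W) : S.medOp f g h V x ≤ S.medOp f g h W x := by
  unfold medOp
  split_ifs with hfg
  · exact med_le_med hfg.le (mul_le_mul_of_nonneg_left (integral_mono hV hW hVW) S.α_pos.le)
  · exact le_rfl

lemma tendsto_medOp {V : ℕ → E → ℝ} {U D : E → ℝ} {x : E} (hV : ∀ n, Measurable (V n))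
    (hD : Integrable D (S.K x)) (hVD : ∀ n y, ‖V n y‖ ≤ D y)
    (hlim : ∀ y, Tendsto (fun n => V n y) atTop (𝓝 (U y))) :
    Tendsto (fun n => S.medOp f g h (V n) x) atTop (𝓝 (S.medOp f g h U x)) := by
  unfold medOp
  split_ifs
  · have hkint : Tendsto (fun n => S.kint (V n) x) atTop (𝓝 (S.kint U x)) :=
      tendsto_integral_of_dominated_convergence D (fun n => (hV n).aestronglyMeasurable) hD
        (fun n => ae_of_all _ (hVD n)) (ae_of_all _ hlim)
    exact tendsto_const_nhds.med (hkint.const_mul S.α) tendsto_const_nhds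
  · exact tendsto_const_nhds

end Setup

section medSeq

variable {S : Setup E Ω} {f g h : E → ℝ}

lemma medSeq_mem_Icc (n : ℕ) (x : E) :
    medSeq S f g h n x ∈ Icc (min (f x) (h x)) (max (g x) (h x)) := by
  cases n with
  | zero => exact ⟨le_rfl, (min_le_right _ _).trans (le_max_right _ _)⟩
  | succ n => exact S.medOp_mem_Icc _ x

lemma norm_medSeq_le (n : ℕ) (x : E) :
    ‖medSeq S f g h n x‖ ≤ max |min (f x) (h x)| |max (g x) (h x)| :=
  abs_le_max_abs_abs (medSeq_mem_Icc n x).1 (medSeq_mem_Icc n x).2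

variable (hf : Measurable f) (hg : Measurable g) (hh : Measurable h)
include hf hg hh

lemma measurable_medSeq (n : ℕ) : Measurable (medSeq S f g h n) := by
  induction n with
  | zero => exact hf.min hh
  | succ n ih => exact S.measurable_medOp hf hg hh ih

variable (hKf : ∀ x, Integrable f (S.K x)) (hKg : ∀ x, Integrable g (S.K x))
  (hKh : ∀ x, Integrable h (S.K x))
include hKf hKg hKh

lemma integrable_medSeq (n : ℕ) (x : E) : Integrable (medSeq S f g h n) (S.K x) :=
  integrable_of_le_of_le (measurable_medSeq hf hg hh n).aestronglyMeasurable
    (ae_of_all _ fun y => (medSeq_mem_Icc n y).1) (ae_of_all _ fun y => (medSeq_mem_Icc n y).2)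
    ((hKf x).inf (hKh x)) ((hKg x).sup (hKh x))

lemma monotone_medSeq (x : E) : Monotone fun n => medSeq S f g h n x := by
  have hstep : ∀ n, medSeq S f g h n ≤ medSeq S f g h (n + 1) := by
    intro n
    induction n with
    | zero => exact fun y => (S.medOp_mem_Icc _ y).1
    | succ n ih =>
      exact fun y => Setup.medOp_mono (integrable_medSeq hf hg hh hKf hKg hKh n y)
        (integrable_medSeq hf hg hh hKf hKg hKh (n + 1) y) ih
  exact monotone_nat_of_le_succ fun n => hstep n x

end medSeq

theorem statement8_general (S : Setup E Ω) (f g h : E → ℝ)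
    (hmf : Measurable f) (hmg : Measurable g) (hmh : Measurable h)
    (hIf : S.KilledSupInt f) (hIg : S.KilledSupInt g) (hIh : S.KilledSupInt h) :
    ∃ V : E → ℝ, Measurable V ∧
      (∀ x : E, Tendsto (fun n => medSeq S f g h n x) atTop (𝓝 (V x))) ∧
      S.SolvesMed f g h V := by
  have hKf := S.integrable_kernel_of_killedSupInt hmf hIf
  have hKg := S.integrable_kernel_of_killedSupInt hmg hIg
  have hKh := S.integrable_kernel_of_killedSupInt hmh hIh
  have hmeas := measurable_medSeq (S := S) hmf hmg hmh
  have hlim : ∀ x, Tendsto (fun n => medSeq S f g h n x) atTop (𝓝 (⨆ n, medSeq S f g h n x)) :=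
    fun x => tendsto_atTop_ciSup (monotone_medSeq hmf hmg hmh hKf hKg hKh x)
      ⟨_, forall_mem_range.2 fun n => (medSeq_mem_Icc n x).2⟩
  refine ⟨_, measurable_of_tendsto_metrizable hmeas (tendsto_pi_nhds.2 hlim), hlim,
    Setup.solvesMed_of_medOp_eq (funext fun x => ?_)⟩
  have hdom : Integrable (fun y => max |min (f y) (h y)| |max (g y) (h y)|) (S.K x) :=
    ((hKf x).inf (hKh x)).abs.sup ((hKg x).sup (hKh x)).abs
  exact tendsto_nhds_unique (Setup.tendsto_medOp hmeas hdom norm_medSeq_le hlim)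
    ((hlim x).comp (tendsto_add_atTop_nat 1))

/-- If `h = med(f, h, g)` pointwise, the iteration `Vⁿ` converges pointwise to a measurable
function `V` solving the zero-sum Wald–Bellman equation. -/
theorem statement8 (S : Setup E Ω) (f g h : E → ℝ)
    (hmf : Measurable f) (hmg : Measurable g) (hmh : Measurable h)
    (hIf : S.KilledSupInt f) (hIg : S.KilledSupInt g) (hIh : S.KilledSupInt h)
    (hmed : ∀ x : E, h x = med (f x) (h x) (g x)) :
    ∃ V : E → ℝ, Measurable V ∧
      (∀ x : E, Tendsto (fun n => medSeq S f g h n x) atTop (𝓝 (V x))) ∧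
      S.SolvesMed f g h V :=
  statement8_general S f g h hmf hmg hmh hIf hIg hIh

end DynkinGame
end
end

section
/- In the zero-sum game, define M₁={x∈E : max(f(x),g(x))<h(x)} and M₂={x∈E : h(x)<min(f(x),g(x))}, let τ_{M_i}=inf{n≥0 : X_n∉M_i}, and set k₁(x)=f(x) for x∈M₁, k₁(x)=min(f(x),h(x)) for x∉M₁, k₂(x)=g(x) for x∈M₂, k₂(x)=max(g(x),h(x)) for x∉M₂. Define V_{M₁}(x)=sup{E_x[α^τ k₁(X_τ)] : τ∈𝒯₁, τ≤τ_{M₁}} for x∈M₁ and V_{M₂}(x)=inf{E_x[α^τ k₂(X_τ)] : τ∈𝒯₂, τ≤τ_{M₂}} for x∈M₂. (A) If V_{M₁}(x₀)>max(f(x₀),g(x₀)) for some x₀∈M₁, then no pure global Markovian equilibrium exists. (B) If V_{M₂}(x₀)<min(f(x₀),g(x₀)) for some x₀∈M₂, then no pure global Markovian equilibrium exists. -/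
open MeasureTheory ProbabilityTheory Set Filter Topology

noncomputable section

namespace DynkinGame

variable {E : Type*} [MeasurableSpace E] {Ω : Type*} [MeasurableSpace Ω]

/-- The first exit time `τ_M = inf {n ≥ 0 : Xₙ ∉ M}` from a set `M ⊆ E`. -/
def Setup.exitTime (S : Setup E Ω) (M : Set E) (ω : Ω) : ℕ∞ :=
  ⨅ n ∈ {n : ℕ | S.X n ω ∉ M}, (n : ℕ∞)

/-- The value `sup {E_x[α^τ k(X_τ)] : τ ∈ 𝒯ᵢ, τ ≤ τ_M}` of the stopping problem for the
maximizer, constrained by the exit time from `M`. -/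
def Setup.conSup (S : Setup E Ω) (i : Fin 2) (k : E → ℝ) (M : Set E) (x : E) : ℝ :=
  ⨆ τ : {τ : Ω → ℕ∞ // τ ∈ S.Adm i ∧ ∀ ω, τ ω ≤ S.exitTime M ω},
    ∫ ω, S.disc k τ.1 ω ∂ S.P x

/-- The value `inf {E_x[α^τ k(X_τ)] : τ ∈ 𝒯ᵢ, τ ≤ τ_M}` of the stopping problem for the
minimizer, constrained by the exit time from `M`. -/
def Setup.conInf (S : Setup E Ω) (i : Fin 2) (k : E → ℝ) (M : Set E) (x : E) : ℝ :=
  ⨅ τ : {τ : Ω → ℕ∞ // τ ∈ S.Adm i ∧ ∀ ω, τ ω ≤ S.exitTime M ω},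
    ∫ ω, S.disc k τ.1 ω ∂ S.P x

/-!
Let `(q₁, q₂)` be a pure equilibrium. On `M₁` simultaneous stopping is the best outcome for
player 1 and the worst for player 2, so whatever pure action player 1 takes there, stopping is
not a best response of player 2: `q₂ = 0` on `M₁`. Hence against `τ^{q₂}` player 1 secures, with
any `τ ≤ τ_{M₁}`, at least `E_x[α^τ k₁(X_τ)]`: the payoff is `f ≥ k₁` if player 2 is still waiting
and `h ≥ k₁` if both stop together, which happens only outside `M₁`. So the equilibrium value at
`x₀` is at least `V_{M₁}(x₀)`. On the other hand player 2 can stop at once (payoff `g`) if player 1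
waits at `x₀`, or never stop (payoff `f`) if player 1 stops there, so the value is at most
`max (f x₀) (g x₀)`. Part (B) is part (A) for the game with the players exchanged and all payoffs
negated. The integrability assumption makes `supₙ αⁿ |φ(Xₙ)|` integrable, which dominates every
payoff.
-/

open scoped ENNReal

section NatInf

variable {A : Set ℕ}

lemma biInf_natCast_le_iff {m : ℕ} : ⨅ n ∈ A, (n : ℕ∞) ≤ m ↔ ∃ k ∈ A, k ≤ m := by
  refine ⟨fun hle => ?_, fun ⟨k, hk, hkm⟩ => (biInf_le _ hk).trans (by exact_mod_cast hkm)⟩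
  by_contra! hlt
  have : ((m + 1 : ℕ) : ℕ∞) ≤ ⨅ n ∈ A, (n : ℕ∞) :=
    le_iInf₂ fun n hn => by exact_mod_cast hlt n hn
  have := this.trans hle
  norm_cast at this
  omega

lemma mem_of_biInf_natCast_eq {m : ℕ} (h : ⨅ n ∈ A, (n : ℕ∞) = m) : m ∈ A := by
  obtain ⟨k, hk, hkm⟩ := biInf_natCast_le_iff.1 h.le
  have : (m : ℕ∞) ≤ k := h ▸ biInf_le _ hk
  rwa [le_antisymm hkm (by exact_mod_cast this)] at hk

lemma biInf_natCast_eq_zero_iff : ⨅ n ∈ A, (n : ℕ∞) = 0 ↔ 0 ∈ A := by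
  rw [← nonpos_iff_eq_zero, ← Nat.cast_zero, biInf_natCast_le_iff]
  simp

end NatInf

lemma measurable_of_measurableSet_le {τ : Ω → ℕ∞}
    (hτ : ∀ n : ℕ, MeasurableSet {ω | τ ω ≤ n}) : Measurable τ := by
  refine measurable_to_countable' fun t => ?_
  induction t using ENat.recTopCoe with
  | top =>
    have : τ ⁻¹' {⊤} = ⋂ n : ℕ, {ω | τ ω ≤ n}ᶜ := by
      ext ω; simp [ENat.eq_top_iff_forall_gt]
    exact this ▸ MeasurableSet.iInter fun n => (hτ n).compl
  | coe n =>
    cases n with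
    | zero =>
      have : τ ⁻¹' {((0 : ℕ) : ℕ∞)} = {ω | τ ω ≤ (0 : ℕ)} := by ext; simp
      exact this ▸ hτ 0
    | succ n =>
      have : τ ⁻¹' {((n + 1 : ℕ) : ℕ∞)} = {ω | τ ω ≤ (n + 1 : ℕ)} \ {ω | τ ω ≤ n} := by
        ext ω
        simp only [Set.mem_preimage, Set.mem_singleton_iff, Set.mem_sdiff, Set.mem_ofPred_eq]
        induction τ ω using ENat.recTopCoe with
        | top => simpa using (ENat.top_ne_natCast (n + 1))
        | coe k => norm_cast; omega
      exact this ▸ (hτ _).diff (hτ n)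

lemma tsum_ofReal_one_sub_mul_pow_add {a : ℝ} (ha₀ : 0 ≤ a) (ha₁ : a < 1) (n : ℕ) :
    ∑' j : ℕ, ENNReal.ofReal ((1 - a) * a ^ (n + j)) = ENNReal.ofReal (a ^ n) := by
  have hsum : Summable fun j : ℕ => (1 - a) * a ^ (n + j) :=
    ((summable_geometric_of_lt_one ha₀ ha₁).mul_left ((1 - a) * a ^ n)).congr fun j => by ring
  rw [← ENNReal.ofReal_tsum_of_nonneg (fun j => by have := pow_nonneg ha₀ (n + j); nlinarith) hsum]
  congr 1
  simp_rw [pow_add, ← mul_assoc, mul_comm _ (a ^ n), mul_assoc]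
  rw [tsum_mul_left, tsum_mul_left, tsum_geometric_of_lt_one ha₀ ha₁,
    mul_inv_cancel₀ (sub_ne_zero.2 ha₁.ne'), mul_one]

lemma integrable_of_enorm_le {μ : Measure Ω} {u : Ω → ℝ} {G : Ω → ℝ≥0∞} (hu : Measurable u)
    (hle : ∀ ω, ‖u ω‖ₑ ≤ G ω) (hG : ∫⁻ ω, G ω ∂μ < ⊤) : Integrable u μ :=
  ⟨hu.aestronglyMeasurable, hasFiniteIntegral_iff_enorm.2 ((lintegral_mono hle).trans_lt hG)⟩

lemma _root_.Real.iSup_neg {ι : Sort*} (u : ι → ℝ) : ⨆ i, -u i = -⨅ i, u i := by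
  rw [iSup, iInf, ← Real.sSup_neg]
  congr 1
  ext; simp [neg_eq_iff_eq_neg]

lemma _root_.Real.iInf_neg {ι : Sort*} (u : ι → ℝ) : ⨅ i, -u i = -⨆ i, u i := by
  rw [iSup, iInf, ← Real.sInf_neg]
  congr 1
  ext; simp [neg_eq_iff_eq_neg]

section ConstrainedReward

variable {β : Type*} {f g h : β → ℝ} {y : β}

def M₁ (f g h : β → ℝ) : Set β := {x | max (f x) (g x) < h x}

def k₁ (f g h : β → ℝ) (x : β) : ℝ := if max (f x) (g x) < h x then f x else min (f x) (h x)

lemma k₁_le_left : k₁ f g h y ≤ f y := by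
  unfold k₁; split_ifs <;> simp

lemma k₁_le_of_notMem (hy : y ∉ M₁ f g h) : k₁ f g h y ≤ h y := by
  simp only [k₁, if_neg (show ¬ max (f y) (g y) < h y from hy), min_le_right]

lemma abs_k₁_le : |k₁ f g h y| ≤ |f y| + |h y| := by
  unfold k₁
  split_ifs
  · linarith [abs_nonneg (h y)]
  · rcases min_cases (f y) (h y) with ⟨hm, -⟩ | ⟨hm, -⟩ <;> rw [hm] <;>
      linarith [abs_nonneg (f y), abs_nonneg (h y)]

lemma measurable_k₁ [MeasurableSpace β] (hf : Measurable f) (hg : Measurable g)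
    (hh : Measurable h) : Measurable (k₁ f g h) :=
  Measurable.ite (measurableSet_lt (hf.max hg) hh) hf (hf.min hh)

end ConstrainedReward

namespace Setup

variable (S : Setup E Ω) {f g h k φ ψ : E → ℝ} {σ τ : Ω → ℕ∞} {x : E} {ω : Ω}

lemma filt_le (i : Fin 2) (n : ℕ) : S.filt i n ≤ ‹MeasurableSpace Ω› :=
  sup_le (iSup₂_le fun k _ => (S.measX k).comap_le) (iSup₂_le fun k _ => (S.measξ i k).comap_le)

lemma measurable_of_mem_Adm {i : Fin 2} (hτ : τ ∈ S.Adm i) : Measurable τ :=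
  measurable_of_measurableSet_le fun n => S.filt_le i n _ (hτ n)

lemma measurable_mrst {p : E → ℝ} (hp : Measurable p) (i : Fin 2) : Measurable (S.mrst i p) := by
  refine measurable_of_measurableSet_le fun n => ?_
  have : {ω | S.mrst i p ω ≤ n} = ⋃ m ≤ n, {ω | S.ξ i m ω ≤ p (S.X m ω)} := by
    ext ω
    show S.mrst i p ω ≤ n ↔ _
    rw [Setup.mrst, biInf_natCast_le_iff]
    simp [and_comm]
  rw [this]
  exact .biUnion (Set.to_countable _) fun m _ =>
    measurableSet_le (S.measξ i m) (hp.comp (S.measX m))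

lemma measurable_disc (hφ : Measurable φ) (hτ : Measurable τ) : Measurable (S.disc φ τ) := by
  have : Measurable fun p : Ω × ℕ∞ => S.disc φ (fun _ => p.2) p.1 :=
    measurable_from_prod_countable_left fun t => by
      unfold Setup.disc
      dsimp only
      split_ifs
      exacts [measurable_const, measurable_const.mul (hφ.comp (S.measX _))]
  exact this.comp (measurable_id.prodMk hτ)

lemma measurable_payoff (hf : Measurable f) (hg : Measurable g) (hh : Measurable h)
    (hσ : Measurable σ) (hτ : Measurable τ) : Measurable (S.payoff f g h σ τ) := by
  have : Measurable fun p : Ω × (ℕ∞ × ℕ∞) =>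
      S.payoff f g h (fun _ => p.2.1) (fun _ => p.2.2) p.1 :=
    measurable_from_prod_countable_left fun t => by
      unfold Setup.payoff
      dsimp only
      have hdisc := fun φ (hφ : Measurable φ) s => S.measurable_disc hφ (measurable_const (a := s))
      refine (Measurable.add (Measurable.add ?_ ?_) ?_) <;> split_ifs <;>
        simp only [hdisc, hf, hg, hh, measurable_const]
  exact this.comp (measurable_id.prodMk (hσ.prodMk hτ))

def envelope (φ : E → ℝ) (ω : Ω) : ℝ≥0∞ := ⨆ n, ‖S.α ^ n * φ (S.X n ω)‖ₑ

lemma enorm_disc_le_envelope : ‖S.disc φ τ ω‖ₑ ≤ S.envelope φ ω := by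
  unfold disc
  split_ifs
  exacts [by simp, le_iSup (fun n => ‖S.α ^ n * φ (S.X n ω)‖ₑ) _]

lemma envelope_le_add (hφψ : ∀ y, |k y| ≤ |φ y| + |ψ y|) :
    S.envelope k ω ≤ S.envelope φ ω + S.envelope ψ ω := by
  refine iSup_le fun n => ?_
  have hα : 0 ≤ S.α ^ n := pow_nonneg S.α_pos.le n
  calc ‖S.α ^ n * k (S.X n ω)‖ₑ
      ≤ ‖S.α ^ n * φ (S.X n ω)‖ₑ + ‖S.α ^ n * ψ (S.X n ω)‖ₑ := by
        simp only [Real.enorm_eq_ofReal_abs, abs_mul, abs_of_nonneg hα]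
        refine (ENNReal.ofReal_le_ofReal ?_).trans ENNReal.ofReal_add_le
        rw [← mul_add]
        exact mul_le_mul_of_nonneg_left (hφψ _) hα
    _ ≤ S.envelope φ ω + S.envelope ψ ω :=
        add_le_add (le_iSup (fun n => ‖S.α ^ n * φ (S.X n ω)‖ₑ) n)
          (le_iSup (fun n => ‖S.α ^ n * ψ (S.X n ω)‖ₑ) n)

/-- `α ^ n = ∑_{k ≥ n} (1 - α) α ^ k`: discounting at rate `α` is killing at a geometric time,
and the killed process has visited `Xₙ` by any time `k ≥ n`. -/
lemma envelope_le_tsum (φ : E → ℝ) (ω : Ω) :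
    S.envelope φ ω ≤ ∑' k : ℕ, ENNReal.ofReal ((1 - S.α) * S.α ^ k) *
      (Finset.range (k + 1)).sup fun n => ENNReal.ofReal |φ (S.X n ω)| := by
  refine iSup_le fun n => ?_
  calc ‖S.α ^ n * φ (S.X n ω)‖ₑ
      = ∑' j : ℕ, ENNReal.ofReal ((1 - S.α) * S.α ^ (n + j)) * ENNReal.ofReal |φ (S.X n ω)| := by
        rw [ENNReal.tsum_mul_right, tsum_ofReal_one_sub_mul_pow_add S.α_pos.le S.α_lt_one,
          enorm_mul, Real.enorm_eq_ofReal_abs, Real.enorm_eq_ofReal_abs,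
          abs_of_nonneg (pow_nonneg S.α_pos.le n)]
    _ ≤ ∑' j : ℕ, ENNReal.ofReal ((1 - S.α) * S.α ^ (n + j)) *
          (Finset.range (n + j + 1)).sup fun m => ENNReal.ofReal |φ (S.X m ω)| :=
        ENNReal.tsum_le_tsum fun j => mul_le_mul_right
          (Finset.le_sup (f := fun m => ENNReal.ofReal |φ (S.X m ω)|)
            (Finset.mem_range.2 (by omega))) _
    _ ≤ _ := ENNReal.tsum_comp_le_tsum_of_injective (add_right_injective n)
          (fun k => ENNReal.ofReal ((1 - S.α) * S.α ^ k) *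
            (Finset.range (k + 1)).sup fun m => ENNReal.ofReal |φ (S.X m ω)|)

lemma lintegral_envelope_lt_top (hφ : Measurable φ) (hI : S.KilledSupInt φ) (x : E) :
    ∫⁻ ω, S.envelope φ ω ∂S.P x < ⊤ := by
  have hsup : ∀ k, Measurable fun ω =>
      (Finset.range (k + 1)).sup fun n => ENNReal.ofReal |φ (S.X n ω)| := fun k => by
    rw [show (fun ω => (Finset.range (k + 1)).sup fun n => ENNReal.ofReal |φ (S.X n ω)|) =
      (Finset.range (k + 1)).sup fun n ω => ENNReal.ofReal |φ (S.X n ω)| by ext; simp]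
    exact Finset.sup_induction (p := Measurable) measurable_const (fun _ h₁ _ h₂ => h₁.sup h₂)
      fun n _ => (hφ.comp (S.measX n)).abs.ennreal_ofReal
  calc ∫⁻ ω, S.envelope φ ω ∂S.P x
      ≤ ∫⁻ ω, ∑' k : ℕ, ENNReal.ofReal ((1 - S.α) * S.α ^ k) *
          (Finset.range (k + 1)).sup (fun n => ENNReal.ofReal |φ (S.X n ω)|) ∂S.P x :=
        lintegral_mono (S.envelope_le_tsum φ)
    _ = _ := by
        rw [lintegral_tsum fun k => ((hsup k).const_mul _).aemeasurable]
        exact tsum_congr fun k => lintegral_const_mul _ (hsup k)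
    _ < ⊤ := hI x

def payoffEnvelope (f g h : E → ℝ) (ω : Ω) : ℝ≥0∞ :=
  S.envelope f ω + S.envelope g ω + S.envelope h ω

lemma lintegral_payoffEnvelope_lt_top (hf : Measurable f) (hg : Measurable g)
    (hh : Measurable h) (hIf : S.KilledSupInt f) (hIg : S.KilledSupInt g)
    (hIh : S.KilledSupInt h) (x : E) : ∫⁻ ω, S.payoffEnvelope f g h ω ∂S.P x < ⊤ := by
  have hmeas : ∀ φ : E → ℝ, Measurable φ → Measurable (S.envelope φ) := fun φ hφ =>
    .iSup fun n => (measurable_const.mul (hφ.comp (S.measX n))).enorm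
  unfold payoffEnvelope
  rw [lintegral_add_left (f := fun ω => S.envelope f ω + S.envelope g ω)
      ((hmeas f hf).add (hmeas g hg)),
    lintegral_add_left (hmeas f hf)]
  exact ENNReal.add_lt_top.2 ⟨ENNReal.add_lt_top.2 ⟨S.lintegral_envelope_lt_top hf hIf x,
    S.lintegral_envelope_lt_top hg hIg x⟩, S.lintegral_envelope_lt_top hh hIh x⟩

lemma payoff_of_lt (hστ : σ ω < τ ω) : S.payoff f g h σ τ ω = S.disc f σ ω := by
  simp [payoff, hστ, hστ.ne, hστ.not_gt]

lemma payoff_of_gt (hστ : τ ω < σ ω) : S.payoff f g h σ τ ω = S.disc g τ ω := by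
  simp [payoff, hστ, hστ.ne', hστ.not_gt]

lemma payoff_of_eq (hστ : σ ω = τ ω) : S.payoff f g h σ τ ω = S.disc h σ ω := by
  simp [payoff, hστ]

lemma disc_of_eq_zero (hτ : τ ω = 0) : S.disc k τ ω = k (S.X 0 ω) := by
  simp [disc, hτ]

lemma enorm_payoff_le : ‖S.payoff f g h σ τ ω‖ₑ ≤ S.payoffEnvelope f g h ω := by
  unfold payoffEnvelope
  rcases lt_trichotomy (σ ω) (τ ω) with hστ | hστ | hστ
  · rw [S.payoff_of_lt hστ]
    exact le_add_right (le_add_right (S.enorm_disc_le_envelope))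
  · rw [S.payoff_of_eq hστ]
    exact le_add_left S.enorm_disc_le_envelope
  · rw [S.payoff_of_gt hστ]
    exact le_add_right (le_add_left S.enorm_disc_le_envelope)

lemma abs_J_le (hfin : ∫⁻ ω, S.payoffEnvelope f g h ω ∂S.P x < ⊤) :
    |S.J f g h σ τ x| ≤ (∫⁻ ω, S.payoffEnvelope f g h ω ∂S.P x).toReal := by
  rw [← Real.norm_eq_abs, J]
  refine (norm_integral_le_lintegral_norm _).trans
    (ENNReal.toReal_mono hfin.ne (lintegral_mono fun ω => ?_))
  rw [ofReal_norm]
  exact S.enorm_payoff_le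

lemma J_eq_of_ae_payoff_eq {c : E → ℝ}
    (hc : ∀ᵐ ω ∂S.P x, S.payoff f g h σ τ ω = c (S.X 0 ω)) : S.J f g h σ τ x = c x := by
  have := S.isProb x
  have : ∀ᵐ ω ∂S.P x, S.payoff f g h σ τ ω = c x := by
    filter_upwards [hc, S.init x] with ω hω h₀
    rw [hω, h₀]
  rw [J, integral_congr_ae this]
  simp

lemma J_eq_of_ae_eq_zero_of_ae_eq_zero (hσ : ∀ᵐ ω ∂S.P x, σ ω = 0)
    (hτ : ∀ᵐ ω ∂S.P x, τ ω = 0) : S.J f g h σ τ x = h x :=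
  S.J_eq_of_ae_payoff_eq <| by
    filter_upwards [hσ, hτ] with ω h₁ h₂
    rw [S.payoff_of_eq (h₁.trans h₂.symm), S.disc_of_eq_zero h₁]

lemma J_eq_of_ae_eq_zero_of_ae_pos (hσ : ∀ᵐ ω ∂S.P x, σ ω = 0)
    (hτ : ∀ᵐ ω ∂S.P x, 0 < τ ω) : S.J f g h σ τ x = f x :=
  S.J_eq_of_ae_payoff_eq <| by
    filter_upwards [hσ, hτ] with ω h₁ h₂
    rw [S.payoff_of_lt (h₁ ▸ h₂), S.disc_of_eq_zero h₁]

lemma J_eq_of_ae_pos_of_ae_eq_zero (hσ : ∀ᵐ ω ∂S.P x, 0 < σ ω)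
    (hτ : ∀ᵐ ω ∂S.P x, τ ω = 0) : S.J f g h σ τ x = g x :=
  S.J_eq_of_ae_payoff_eq <| by
    filter_upwards [hσ, hτ] with ω h₁ h₂
    rw [S.payoff_of_gt (h₂ ▸ h₁), S.disc_of_eq_zero h₂]

lemma const_mem_Adm (i : Fin 2) (c : ℕ∞) : (fun _ : Ω => c) ∈ S.Adm i :=
  fun _ => MeasurableSet.const _

lemma ae_ξ_mem_Ioc (x : E) : ∀ᵐ ω ∂S.P x, ∀ i n, S.ξ i n ω ∈ Ioc (0 : ℝ) 1 := by
  simp only [ae_all_iff]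
  intro i n
  have : ∀ᵐ y ∂volume.restrict (Icc (0 : ℝ) 1), y ∈ Ioc (0 : ℝ) 1 := by
    rw [ae_restrict_iff' measurableSet_Icc]
    filter_upwards [Measure.ae_ne volume 0] with y hy hmem
    exact ⟨lt_of_le_of_ne hmem.1 hy.symm, hmem.2⟩
  exact ae_of_ae_map (S.measξ i n).aemeasurable (S.unif x i n ▸ this)

lemma ae_mrst_eq_zero {q : E → ℝ} (hq : q x = 1) (i : Fin 2) :
    ∀ᵐ ω ∂S.P x, S.mrst i q ω = 0 := by
  filter_upwards [S.init x, S.ae_ξ_mem_Ioc x] with ω h₀ hξ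
  rw [mrst, biInf_natCast_eq_zero_iff]
  show S.ξ i 0 ω ≤ q (S.X 0 ω)
  rw [h₀, hq]
  exact (hξ i 0).2

lemma ae_mrst_pos {q : E → ℝ} (hq : q x = 0) (i : Fin 2) :
    ∀ᵐ ω ∂S.P x, 0 < S.mrst i q ω := by
  filter_upwards [S.init x, S.ae_ξ_mem_Ioc x] with ω h₀ hξ
  rw [pos_iff_ne_zero, mrst, Ne, biInf_natCast_eq_zero_iff]
  show ¬ S.ξ i 0 ω ≤ q (S.X 0 ω)
  rw [h₀, hq, not_le]
  exact (hξ i 0).1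

lemma disc_le_disc (hkφ : ∀ n : ℕ, τ ω = n → k (S.X n ω) ≤ φ (S.X n ω)) :
    S.disc k τ ω ≤ S.disc φ τ ω := by
  unfold disc
  split_ifs with hτ
  · rfl
  · exact mul_le_mul_of_nonneg_left (hkφ _ (ENat.natCast_toNat hτ).symm) (pow_nonneg S.α_pos.le _)

lemma ae_mrst_stops_outside {q : E → ℝ} {M : Set E} (hq : ∀ y ∈ M, q y = 0) (i : Fin 2) :
    ∀ᵐ ω ∂S.P x, ∀ n, S.ξ i n ω ≤ q (S.X n ω) → S.X n ω ∉ M := by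
  filter_upwards [S.ae_ξ_mem_Ioc x] with ω hξ n hn hM
  exact (hξ i n).1.not_ge (hn.trans (hq _ hM).le)

lemma integral_disc_k₁_le_J (hf : Measurable f) (hg : Measurable g) (hh : Measurable h)
    (hfin : ∫⁻ ω, S.payoffEnvelope f g h ω ∂S.P x < ⊤) {q : E → ℝ} (hq : Measurable q)
    (hqM : ∀ y ∈ M₁ f g h, q y = 0) (hτ : τ ∈ S.Adm 0)
    (hτM : ∀ ω, τ ω ≤ S.exitTime (M₁ f g h) ω) :
    ∫ ω, S.disc (k₁ f g h) τ ω ∂S.P x ≤ S.J f g h τ (S.mrst 1 q) x := by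
  have hτm := S.measurable_of_mem_Adm hτ
  have hdisc : ∀ ω, ‖S.disc (k₁ f g h) τ ω‖ₑ ≤ S.payoffEnvelope f g h ω := fun ω =>
    S.enorm_disc_le_envelope.trans <| (S.envelope_le_add fun _ => abs_k₁_le).trans <| by
      unfold payoffEnvelope
      gcongr
      exact le_add_right le_rfl
  refine integral_mono_ae
    (integrable_of_enorm_le (S.measurable_disc (measurable_k₁ hf hg hh) hτm) hdisc hfin)
    (integrable_of_enorm_le (S.measurable_payoff hf hg hh hτm (S.measurable_mrst hq 1))
      (fun ω => S.enorm_payoff_le) hfin) ?_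
  filter_upwards [S.ae_mrst_stops_outside hqM 1] with ω hω
  rcases ((hτM ω).trans (biInf_mono hω)).lt_or_eq with hlt | heq
  · rw [S.payoff_of_lt hlt]
    exact S.disc_le_disc fun _ _ => k₁_le_left
  · rw [S.payoff_of_eq heq]
    exact S.disc_le_disc fun n hn =>
      k₁_le_of_notMem (hω n (mem_of_biInf_natCast_eq (heq ▸ hn)))

def swap : Setup E Ω :=
  { S with
    ξ := fun i => S.ξ i.rev
    measξ := fun i => S.measξ i.rev
    unif := fun x i => S.unif x i.rev
    indep := fun x => by
      have he : Function.Involutive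
          (Option.map (Prod.map (Fin.rev : Fin 2 → Fin 2) (id : ℕ → ℕ))) := by
        intro j; rcases j with _ | ⟨i, n⟩ <;> simp
      convert (iIndep_precomp_of_bijective he.bijective).2 (S.indep x) using 1
      funext j
      rcases j with _ | ⟨i, n⟩ <;> rfl }

lemma disc_neg : S.disc (-k) τ = -S.disc k τ := by
  funext ω
  simp only [disc, Pi.neg_apply]
  split_ifs <;> ring

lemma J_neg_swap : S.J (-g) (-f) (-h) τ σ x = -S.J f g h σ τ x := by
  rw [J, J, ← integral_neg]
  congr 1
  funext ω
  rcases lt_trichotomy (σ ω) (τ ω) with hστ | hστ | hστ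
  · rw [S.payoff_of_gt hστ, S.payoff_of_lt hστ, disc_neg, Pi.neg_apply]
  · rw [S.payoff_of_eq hστ.symm, S.payoff_of_eq hστ, disc_neg, Pi.neg_apply]
    simp only [disc, hστ]
  · rw [S.payoff_of_lt hστ, S.payoff_of_gt hστ, disc_neg, Pi.neg_apply]

lemma swap_conSup_neg (M : Set E) :
    S.swap.conSup 0 (-k) M x = -S.conInf 1 k M x := by
  rw [conSup, conInf, ← Real.iSup_neg]
  congr 1
  funext τ
  rw [← integral_neg]
  congr 1
  funext ω
  show S.disc (-k) τ.1 ω = -S.disc k τ.1 ω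
  rw [S.disc_neg, Pi.neg_apply]

lemma swap_killedSupInt_neg (hI : S.KilledSupInt φ) : S.swap.KilledSupInt (-φ) := by
  have : S.KilledSupInt (-φ) := by simpa only [KilledSupInt, Pi.neg_apply, abs_neg] using hI
  exact this

section Equilibrium

variable {S} {q₁ q₂ : E → ℝ}

lemma IsZSEq.swap (hEq : S.IsZSEq f g h q₁ q₂) :
    S.swap.IsZSEq (-g) (-f) (-h) q₂ q₁ := by
  refine ⟨hEq.2.1, hEq.1, fun x => ⟨?_, ?_⟩⟩
  · show S.J (-g) (-f) (-h) (S.mrst 1 q₂) (S.mrst 0 q₁) x =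
      ⨆ τ : S.Adm 1, S.J (-g) (-f) (-h) τ.1 (S.mrst 0 q₁) x
    simp_rw [J_neg_swap, Real.iSup_neg, ← (hEq.2.2 x).2]
  · show S.J (-g) (-f) (-h) (S.mrst 1 q₂) (S.mrst 0 q₁) x =
      ⨅ σ : S.Adm 0, S.J (-g) (-f) (-h) (S.mrst 1 q₂) σ.1 x
    simp_rw [J_neg_swap, Real.iInf_neg, ← (hEq.2.2 x).1]

lemma IsZSEq.J_le_value (hEq : S.IsZSEq f g h q₁ q₂)
    (hfin : ∫⁻ ω, S.payoffEnvelope f g h ω ∂S.P x < ⊤) (hσ : σ ∈ S.Adm 0) :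
    S.J f g h σ (S.mrst 1 q₂) x ≤ S.J f g h (S.mrst 0 q₁) (S.mrst 1 q₂) x :=
  (hEq.2.2 x).1 ▸ le_ciSup (f := fun σ : S.Adm 0 => S.J f g h σ.1 (S.mrst 1 q₂) x)
    ⟨_, Set.forall_mem_range.2 fun _ => (abs_le.1 (S.abs_J_le hfin)).2⟩ ⟨σ, hσ⟩

lemma IsZSEq.value_le_J (hEq : S.IsZSEq f g h q₁ q₂)
    (hfin : ∫⁻ ω, S.payoffEnvelope f g h ω ∂S.P x < ⊤) (hτ : τ ∈ S.Adm 1) :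
    S.J f g h (S.mrst 0 q₁) (S.mrst 1 q₂) x ≤ S.J f g h (S.mrst 0 q₁) τ x :=
  (hEq.2.2 x).2 ▸ ciInf_le (f := fun τ : S.Adm 1 => S.J f g h (S.mrst 0 q₁) τ.1 x)
    ⟨_, Set.forall_mem_range.2 fun _ => (abs_le.1 (S.abs_J_le hfin)).1⟩ ⟨τ, hτ⟩

lemma IsZSEq.eq_zero_of_mem_M₁ (hEq : S.IsZSEq f g h q₁ q₂) (hq₁ : IsPure q₁) (hq₂ : IsPure q₂)
    {y : E} (hfin : ∫⁻ ω, S.payoffEnvelope f g h ω ∂S.P y < ⊤) (hy : y ∈ M₁ f g h) :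
    q₂ y = 0 := by
  have hy : max (f y) (g y) < h y := hy
  refine (hq₂ y).resolve_right fun h₂ => ?_
  rcases hq₁ y with h₁ | h₁
  · have hdev := hEq.J_le_value hfin (S.const_mem_Adm 0 0)
    rw [S.J_eq_of_ae_eq_zero_of_ae_eq_zero (ae_of_all _ fun _ => rfl) (S.ae_mrst_eq_zero h₂ 1),
      S.J_eq_of_ae_pos_of_ae_eq_zero (S.ae_mrst_pos h₁ 0) (S.ae_mrst_eq_zero h₂ 1)] at hdev
    linarith [le_max_right (f y) (g y)]
  · have hdev := hEq.value_le_J hfin (S.const_mem_Adm 1 ⊤)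
    rw [S.J_eq_of_ae_eq_zero_of_ae_eq_zero (S.ae_mrst_eq_zero h₁ 0) (S.ae_mrst_eq_zero h₂ 1),
      S.J_eq_of_ae_eq_zero_of_ae_pos (S.ae_mrst_eq_zero h₁ 0) (ae_of_all _ fun _ => ENat.top_pos)]
      at hdev
    linarith [le_max_left (f y) (g y)]

lemma IsZSEq.value_le_max (hEq : S.IsZSEq f g h q₁ q₂) (hq₁ : IsPure q₁)
    (hfin : ∫⁻ ω, S.payoffEnvelope f g h ω ∂S.P x < ⊤) :
    S.J f g h (S.mrst 0 q₁) (S.mrst 1 q₂) x ≤ max (f x) (g x) := by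
  rcases hq₁ x with h₁ | h₁
  · have hdev := hEq.value_le_J hfin (S.const_mem_Adm 1 0)
    rw [S.J_eq_of_ae_pos_of_ae_eq_zero (S.ae_mrst_pos h₁ 0) (ae_of_all _ fun _ => rfl)] at hdev
    exact hdev.trans (le_max_right _ _)
  · have hdev := hEq.value_le_J hfin (S.const_mem_Adm 1 ⊤)
    rw [S.J_eq_of_ae_eq_zero_of_ae_pos (S.ae_mrst_eq_zero h₁ 0)
      (ae_of_all _ fun _ => ENat.top_pos)] at hdev
    exact hdev.trans (le_max_left _ _)

lemma IsZSEq.conSup_le_value (hEq : S.IsZSEq f g h q₁ q₂) (hf : Measurable f)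
    (hg : Measurable g) (hh : Measurable h) (hfin : ∫⁻ ω, S.payoffEnvelope f g h ω ∂S.P x < ⊤)
    (hq₂M : ∀ y ∈ M₁ f g h, q₂ y = 0) :
    S.conSup 0 (k₁ f g h) (M₁ f g h) x ≤ S.J f g h (S.mrst 0 q₁) (S.mrst 1 q₂) x := by
  have : Nonempty {τ : Ω → ℕ∞ // τ ∈ S.Adm 0 ∧ ∀ ω, τ ω ≤ S.exitTime (M₁ f g h) ω} :=
    ⟨⟨fun _ => 0, S.const_mem_Adm 0 0, fun _ => zero_le⟩⟩
  exact ciSup_le fun τ => (S.integral_disc_k₁_le_J hf hg hh hfin hEq.2.1.1 hq₂M τ.2.1 τ.2.2).trans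
    (hEq.J_le_value hfin τ.2.1)

theorem not_exists_pure_isZSEq_of_max_lt_conSup (hf : Measurable f) (hg : Measurable g)
    (hh : Measurable h) (hIf : S.KilledSupInt f) (hIg : S.KilledSupInt g)
    (hIh : S.KilledSupInt h) {x₀ : E}
    (hval : max (f x₀) (g x₀) < S.conSup 0 (k₁ f g h) (M₁ f g h) x₀) :
    ¬ ∃ q₁ q₂ : E → ℝ, IsPure q₁ ∧ IsPure q₂ ∧ S.IsZSEq f g h q₁ q₂ := by
  rintro ⟨q₁, q₂, hq₁, hq₂, hEq⟩
  have hfin := S.lintegral_payoffEnvelope_lt_top hf hg hh hIf hIg hIh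
  have hwait : ∀ y ∈ M₁ f g h, q₂ y = 0 := fun y =>
    hEq.eq_zero_of_mem_M₁ hq₁ hq₂ (hfin y)
  linarith [hEq.value_le_max hq₁ (hfin x₀), hEq.conSup_le_value hf hg hh (hfin x₀) hwait]

end Equilibrium

end Setup

/-- Sufficient conditions for the non-existence of pure equilibria of the zero-sum game,
in terms of the sets `M₁ = {f ∨ g < h}`, `M₂ = {h < f ∧ g}` and the associated constrained
optimal stopping problems. -/
theorem statement12 (S : Setup E Ω) (f g h : E → ℝ)
    (hmf : Measurable f) (hmg : Measurable g) (hmh : Measurable h)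
    (hIf : S.KilledSupInt f) (hIg : S.KilledSupInt g) (hIh : S.KilledSupInt h) :
    (∀ x₀ : E, x₀ ∈ {x : E | max (f x) (g x) < h x} →
      max (f x₀) (g x₀) <
        S.conSup 0 (fun x => if max (f x) (g x) < h x then f x else min (f x) (h x))
          {x : E | max (f x) (g x) < h x} x₀ →
      ¬ ∃ q₁ q₂ : E → ℝ, IsPure q₁ ∧ IsPure q₂ ∧ S.IsZSEq f g h q₁ q₂) ∧
    (∀ x₀ : E, x₀ ∈ {x : E | h x < min (f x) (g x)} →
      S.conInf 1 (fun x => if h x < min (f x) (g x) then g x else max (g x) (h x))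
          {x : E | h x < min (f x) (g x)} x₀ < min (f x₀) (g x₀) →
      ¬ ∃ q₁ q₂ : E → ℝ, IsPure q₁ ∧ IsPure q₂ ∧ S.IsZSEq f g h q₁ q₂) := by
  refine ⟨fun x₀ _ hval => S.not_exists_pure_isZSEq_of_max_lt_conSup hmf hmg hmh hIf hIg hIh hval,
    fun x₀ _ hval ⟨q₁, q₂, hq₁, hq₂, hEq⟩ => ?_⟩
  have hM : M₁ (-g) (-f) (-h) = {x | h x < min (f x) (g x)} := by
    ext x; simp [M₁, and_comm]
  have hk : k₁ (-g) (-f) (-h) =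
      -fun x => if h x < min (f x) (g x) then g x else max (g x) (h x) := by
    funext x
    simp only [k₁, Pi.neg_apply, max_neg_neg, min_neg_neg, neg_lt_neg_iff, min_comm (g x)]
    split_ifs <;> rfl
  refine S.swap.not_exists_pure_isZSEq_of_max_lt_conSup hmg.neg hmf.neg hmh.neg
    (S.swap_killedSupInt_neg hIg) (S.swap_killedSupInt_neg hIf) (S.swap_killedSupInt_neg hIh)
    (x₀ := x₀) ?_ ⟨q₂, q₁, hq₂, hq₁, hEq.swap⟩
  rw [hk, hM, S.swap_conSup_neg]
  simpa [and_comm] using hval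

end DynkinGame
end
end
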